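/- Let i ≥ 1 and r be nonnegative integers such that r−i > 0 is even. Then every Z ∈ Val_i^r is simple, i.e. Z(P) = 0 for every lattice polygon P of dimension at most 1. -/

import Mathlib

open MvPolynomial Matrix

noncomputable section

abbrev Vec : Type := Fin 2 → ℝ
abbrev IVec : Type := Fin 2 → ℤ

/-- The point of `ℝ²` corresponding to a lattice point. -/
def toVec (v : IVec) : Vec := fun i => (v i : ℝ)

/-- A lattice polygon: the convex hull of a nonempty finite set of lattice points. -/
def IsLatticePolygon (P : Set Vec) : Prop :=
  ∃ S : Finset IVec, S.Nonempty ∧ P = convexHull ℝ (toVec '' (S : Set IVec))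

/-- The type of lattice polygons in the plane. -/
abbrev LP : Type := {P : Set Vec // IsLatticePolygon P}

/-- The action of an integer matrix `φ` on polynomials, `f ↦ f ∘ φ*`. -/
def polyAct (φ : Matrix (Fin 2) (Fin 2) ℤ) (f : MvPolynomial (Fin 2) ℝ) :
    MvPolynomial (Fin 2) ℝ :=
  aeval (fun i => ∑ j, (φ j i : ℝ) • X j) f

def matVecMap (φ : Matrix (Fin 2) (Fin 2) ℤ) (v : Vec) : Vec :=
  (φ.map fun a => (a : ℝ)) *ᵥ v

/-- The image `φ P` of a subset of the plane under an integer matrix. -/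
def matSet (φ : Matrix (Fin 2) (Fin 2) ℤ) (P : Set Vec) : Set Vec := matVecMap φ '' P

/-- The translate `P + v` of a subset of the plane by a lattice vector. -/
def translateSet (v : IVec) (P : Set Vec) : Set Vec := (fun p => p + toVec v) '' P

/-- The dilate `m P`. -/
def dilateSet (m : ℕ) (P : Set Vec) : Set Vec := (fun p => (m : ℝ) • p) '' P

/-- The linear polynomial `a x + b y` associated with `v = (a, b)`. -/
def linPoly (v : IVec) : MvPolynomial (Fin 2) ℝ := ∑ i, (v i : ℝ) • X i

/-- The valuation property on lattice polygons. -/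
def IsValuation {M : Type*} [AddCommMonoid M] (Z : LP → M) : Prop :=
  ∀ P Q U I : LP, U.val = P.val ∪ Q.val → I.val = P.val ∩ Q.val →
    Z P + Z Q = Z U + Z I

/-- `GL₂(ℤ)` equivariance: `Z(φ P) = Z(P) ∘ φ*`. -/
def IsEquivariant (Z : LP → MvPolynomial (Fin 2) ℝ) : Prop :=
  ∀ φ : Matrix (Fin 2) (Fin 2) ℤ, IsUnit φ.det →
    ∀ P Q : LP, Q.val = matSet φ P.val → Z Q = polyAct φ (Z P)

/-- `A j = Z^{r-j}` is the family of associated valuations of `Z`, witnessing that `Z`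
is translatively polynomial of rank `r`. -/
def IsAssocFamily (r : ℕ) (Z : LP → MvPolynomial (Fin 2) ℝ)
    (A : ℕ → LP → MvPolynomial (Fin 2) ℝ) : Prop :=
  A 0 = Z ∧ (∀ j, j ≤ r → ∀ P, (A j P).IsHomogeneous (r - j)) ∧
    ∀ (P Q : LP) (v : IVec), Q.val = translateSet v P.val →
      Z Q = ∑ j ∈ Finset.range (r + 1), ((j.factorial : ℝ)⁻¹) • (A j P * linPoly v ^ j)

def IsTranslativelyPolynomial (r : ℕ) (Z : LP → MvPolynomial (Fin 2) ℝ) : Prop :=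
  ∃ A, IsAssocFamily r Z A

/-- `i`-homogeneity: `Z(mP) = m^i Z(P)` for all integers `m ≥ 0`. -/
def IsHomogeneousVal (i : ℕ) (Z : LP → MvPolynomial (Fin 2) ℝ) : Prop :=
  ∀ (m : ℕ) (P Q : LP), Q.val = dilateSet m P.val → Z Q = (m : ℝ) ^ i • Z P

/-- Membership in `Val_i^r`. -/
def MemVal (i r : ℕ) (Z : LP → MvPolynomial (Fin 2) ℝ) : Prop :=
  IsValuation Z ∧ (∀ P, (Z P).IsHomogeneous r) ∧ IsEquivariant Z ∧
    IsTranslativelyPolynomial r Z ∧ IsHomogeneousVal i Z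

/-- The space `Val_i^r` (the set `{Z | MemVal i r Z}` is a linear subspace, so it
coincides with its span). -/
def ValIR (i r : ℕ) : Submodule ℝ (LP → MvPolynomial (Fin 2) ℝ) :=
  Submodule.span ℝ {Z | MemVal i r Z}

/-- The number of partitions of `r` into parts `2` and `3`. -/
def p23 (r : ℕ) : ℕ :=
  (((Finset.range (r + 1)) ×ˢ (Finset.range (r + 1))).filter
    fun kl => 2 * kl.1 + 3 * kl.2 = r).card

def iz0 : IVec := ![0, 0]
def ie1 : IVec := ![1, 0]
def ie2 : IVec := ![0, 1]

/-- The standard triangle `T△ = conv{0, e₁, e₂}` as a lattice polygon. -/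
def stdTriangle : LP :=
  ⟨convexHull ℝ (toVec '' (({iz0, ie1, ie2} : Finset IVec) : Set IVec)),
    {iz0, ie1, ie2}, by simp, rfl⟩

/-- The segment `conv{0, e₁}` as a lattice polygon. -/
def segLP : LP :=
  ⟨convexHull ℝ (toVec '' (({iz0, ie1} : Finset IVec) : Set IVec)),
    {iz0, ie1}, by simp, rfl⟩

/-- `P` has dimension at most one. -/
def DimAtMostOne (P : Set Vec) : Prop := Module.rank ℝ (vectorSpan ℝ P) ≤ 1

/-- A simple valuation vanishes on polygons of dimension at most one. -/
def IsSimpleVal {M : Type*} [Zero M] (Z : LP → M) : Prop :=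
  ∀ P : LP, DimAtMostOne P.val → Z P = 0

/-- The unimodular triangle `φ T△ + v`. -/
def uniTri (φ : Matrix (Fin 2) (Fin 2) ℤ) (v : IVec) : Set Vec :=
  translateSet v (matSet φ stdTriangle.val)

def IsUnimodularTriangle (P : Set Vec) : Prop :=
  ∃ φ v, IsUnit (Matrix.det φ) ∧ P = uniTri φ v

/-- A unimodular triangulation of `P`, given by triangles `φᵢ T△ + vᵢ`, `1 ≤ i ≤ m`:
pairwise distinct unimodular triangles covering `P` such that any two of them intersect
in a common (possibly empty) face. -/
def IsUnimodularTriangulation (P : LP) (m : ℕ)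
    (T : Fin m → Matrix (Fin 2) (Fin 2) ℤ) (v : Fin m → IVec) : Prop :=
  (∀ i, IsUnit (T i).det) ∧
    Function.Injective (fun i => uniTri (T i) (v i)) ∧
    P.val = ⋃ i, uniTri (T i) (v i) ∧
    ∀ i j, IsExtreme ℝ (uniTri (T i) (v i)) (uniTri (T i) (v i) ∩ uniTri (T j) (v j))

/-- The group `G` of unimodular matrices `φ` such that `T△ = φ T△ + v` for some `v ∈ ℤ²`. -/
def memG (φ : Matrix (Fin 2) (Fin 2) ℤ) : Prop :=
  IsUnit φ.det ∧ ∃ v : IVec, stdTriangle.val = translateSet v (matSet φ stdTriangle.val)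

def GInvariant (f : MvPolynomial (Fin 2) ℝ) : Prop := ∀ φ, memG φ → polyAct φ f = f

def swapMat : Matrix (Fin 2) (Fin 2) ℤ := !![0, 1; 1, 0]
def reflMat1 : Matrix (Fin 2) (Fin 2) ℤ := !![1, 0; 0, -1]
def reflMat2 : Matrix (Fin 2) (Fin 2) ℤ := !![-1, 0; 0, 1]
def negIdMat : Matrix (Fin 2) (Fin 2) ℤ := !![-1, 0; 0, -1]

/-- Invariance under the group `D` generated by the coordinate swap and the reflection
at the first coordinate axis. -/
def DInvariant (f : MvPolynomial (Fin 2) ℝ) : Prop :=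
  polyAct swapMat f = f ∧ polyAct reflMat1 f = f

/-- Invariance under the group `H` generated by the coordinate swap and `-Id`. -/
def HInvariant (f : MvPolynomial (Fin 2) ℝ) : Prop :=
  polyAct swapMat f = f ∧ polyAct negIdMat f = f

/-- The space `ℝ[x,y]_r^G` of `G`-invariant `r`-homogeneous polynomials (the defining
set is a linear subspace, so it coincides with its span). -/
def RG (r : ℕ) : Submodule ℝ (MvPolynomial (Fin 2) ℝ) :=
  Submodule.span ℝ {f | f.IsHomogeneous r ∧ GInvariant f}

abbrev PS : Type := MvPowerSeries (Fin 2) ℝ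

/-- The power series `exp(a x + b y)` for `v = (a, b) ∈ ℤ²`. -/
def expv (v : IVec) : PS := fun d =>
  ((v 0 : ℝ) ^ d 0 * (v 1 : ℝ) ^ d 1) / ((Nat.factorial (d 0) : ℝ) * (Nat.factorial (d 1) : ℝ))

/-- The degree-`n` homogeneous summand of a formal power series, as a polynomial. -/
def psHom (n : ℕ) (f : PS) : MvPolynomial (Fin 2) ℝ :=
  ∑ i ∈ Finset.range (n + 1),
    monomial (Finsupp.single 0 i + Finsupp.single 1 (n - i))
      (MvPowerSeries.coeff (Finsupp.single 0 i + Finsupp.single 1 (n - i)) f)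

/-- The action `f ↦ f ∘ φ*` on formal power series. -/
def psAct (φ : Matrix (Fin 2) (Fin 2) ℤ) (f : PS) : PS := fun d =>
  MvPolynomial.coeff d (polyAct φ (psHom (d 0 + d 1) f))

/-- The substitution `f(x,y) ↦ f(c x, c y)` on formal power series. -/
def psRescale (c : ℝ) (f : PS) : PS := fun d => c ^ (d 0 + d 1) * MvPowerSeries.coeff d f

/-- Translative exponentiality: `Z(P + v) = e^v Z(P)`. -/
def IsTransExp (Z : LP → PS) : Prop :=
  ∀ (P Q : LP) (v : IVec), Q.val = translateSet v P.val → Z Q = expv v * Z P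

def IsEquivariantPS (Z : LP → PS) : Prop :=
  ∀ φ : Matrix (Fin 2) (Fin 2) ℤ, IsUnit φ.det →
    ∀ P Q : LP, Q.val = matSet φ P.val → Z Q = psAct φ (Z P)

/-- `d`-dilativity: `Z(mP)(x,y) = m^{-d} Z(P)(mx, my)` for all integers `m > 0`. -/
def IsDilative (d : ℤ) (Z : LP → PS) : Prop :=
  ∀ m : ℕ, 0 < m → ∀ P Q : LP, Q.val = dilateSet m P.val →
    Z Q = ((m : ℝ) ^ (-d)) • psRescale (m : ℝ) (Z P)

/-- Membership in `Val̄`. -/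
def MemValBar (Z : LP → PS) : Prop := IsValuation Z ∧ IsEquivariantPS Z ∧ IsTransExp Z

/-- Membership in `Val̄_d`. -/
def MemValBarD (d : ℤ) (Z : LP → PS) : Prop := MemValBar Z ∧ IsDilative d Z

def ValBar : Submodule ℝ (LP → PS) := Submodule.span ℝ {Z | MemValBar Z}

def ValBarD (d : ℤ) : Submodule ℝ (LP → PS) := Submodule.span ℝ {Z | MemValBarD d Z}

/-- The `r`-th discrete moment polynomial `L^r(P) = (1/r!) Σ_{v ∈ P ∩ ℤ²} v^r`. -/
def discMoment (r : ℕ) (P : Set Vec) : MvPolynomial (Fin 2) ℝ :=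
  ((r.factorial : ℝ)⁻¹) • ∑ᶠ v ∈ {v : IVec | toVec v ∈ P}, linPoly v ^ r

/-- `L i = L_i^r` is the family of Ehrhart coefficients of the `r`-th discrete moment
polynomial: `L^r(mP) = Σ_{i=0}^{r+2} m^i L_i^r(P)` for all integers `m ≥ 0`. -/
def IsEhrhartFamily (r : ℕ) (L : ℕ → LP → MvPolynomial (Fin 2) ℝ) : Prop :=
  (∀ i P, (L i P).IsHomogeneous r) ∧
    ∀ (P : LP) (m : ℕ) (Q : LP), Q.val = dilateSet m P.val →
      discMoment r Q.val = ∑ i ∈ Finset.range (r + 3), (m : ℝ) ^ i • L i P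

end

/-
Restricted to points, translative polynomiality and `i`-homogeneity force `Z {v} = a · vⁱ` with
`a = Z^{r-i}({0}) / i!`; equivariance makes `a` a `GL₂(ℤ)`-invariant form of degree `r - i > 0`, and
invariance under the two elementary shears kills it.

Once points vanish, `Z` is additive on lattice segments of a line, and every lattice segment is a
unimodular image of a horizontal one `[c, c + m e₁]`. On unit segments, `g v = Z [v, v + e₁]` is a
polynomial in `v` satisfying `∑_{l<k} g (k v + l e₁) = kⁱ g v` (homogeneity) and
`g (-v - e₁) = (-1)ⁱ g v` (the map `-Id`, using that `r - i` is even). Let `G` be the discrete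
antiderivative of `g` in the first coordinate. The first identity makes `G` homogeneous of degree
`i` along rays, hence `G (-u) = (-1)ⁱ G u`, while the second one telescopes to
`G (-u) = -(-1)ⁱ G u`. So `G`, and with it `g`, vanishes.
-/

open Finset

theorem Polynomial.eq_zero_of_forall_eval_natCast_eq_zero {R : Type*} [CommRing R] [IsDomain R]
    [CharZero R] {p : Polynomial R} (h : ∀ n : ℕ, p.eval (n : R) = 0) : p = 0 :=
  p.eq_zero_of_infinite_isRoot <|
    (Set.infinite_range_of_injective Nat.cast_injective).mono (by rintro _ ⟨n, rfl⟩; exact h n)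

theorem eq_of_forall_natCast_sum_pow_mul {R : Type*} [CommRing R] [IsDomain R] [CharZero R]
    {N i : ℕ} (hi : i ≤ N) (w : ℕ → R) (f : R)
    (h : ∀ n : ℕ, ∑ j ∈ range (N + 1), (n : R) ^ j * w j = (n : R) ^ i * f) : w i = f := by
  have hp : ∑ j ∈ range (N + 1), Polynomial.C (w j) * Polynomial.X ^ j
      - Polynomial.C f * Polynomial.X ^ i = 0 :=
    Polynomial.eq_zero_of_forall_eval_natCast_eq_zero fun n => by
      simp only [Polynomial.eval_sub, Polynomial.eval_finsetSum, Polynomial.eval_mul,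
        Polynomial.eval_C, Polynomial.eval_pow, Polynomial.eval_X]
      simp only [mul_comm (w _), h n, mul_comm f, sub_self]
  have := congrArg (Polynomial.coeff · i) hp
  simpa [Polynomial.coeff_X_pow, hi, Nat.lt_succ_iff, sub_eq_zero] using this

theorem exists_polynomial_eval_add_one (a : ℕ) :
    ∃ q : Polynomial ℝ, q.eval 0 = 0 ∧ ∀ s, q.eval (s + 1) = q.eval s + s ^ a := by
  set B := (Polynomial.bernoulli (a + 1)).map (algebraMap ℚ ℝ)
  have hB : ∀ s : ℝ, B.eval (s + 1) = B.eval s + (a + 1) * s ^ a := fun s => by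
    simpa [B, Polynomial.eval_map, add_comm] using
      congrArg (fun p => (p.map (algebraMap ℚ ℝ)).eval s)
        (Polynomial.bernoulli_comp_one_add_X (a + 1))
  refine ⟨((a : ℝ) + 1)⁻¹ • (B - Polynomial.C (B.eval 0)), by simp, fun s => ?_⟩
  simp only [Polynomial.eval_smul, Polynomial.eval_sub, Polynomial.eval_C, hB, smul_eq_mul]
  field_simp
  ring

theorem MvPolynomial.IsHomogeneous.eval_smul {σ R : Type*} [Fintype σ] [CommSemiring R]
    {p : MvPolynomial σ R} {n : ℕ} (hp : p.IsHomogeneous n) (c : R) (x : σ → R) :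
    eval (c • x) p = c ^ n * eval x p := by
  simp only [eval_eq', Finset.mul_sum, Pi.smul_apply, smul_eq_mul, mul_pow,
    Finset.prod_mul_distrib, Finset.prod_pow_eq_pow_sum]
  refine Finset.sum_congr rfl fun d hd => ?_
  have : ∑ i, d i = n := by
    simpa [Finsupp.weight_apply, Finsupp.sum_fintype] using hp (mem_support_iff.mp hd)
  rw [this]; ring

@[simp] theorem toVec_add (a b : IVec) : toVec (a + b) = toVec a + toVec b := by
  funext i; simp [toVec]

@[simp] theorem toVec_zero : toVec 0 = 0 := by
  funext i; simp [toVec]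

@[simp] theorem toVec_neg (a : IVec) : toVec (-a) = -toVec a := by
  funext i; simp [toVec]

@[simp] theorem toVec_nsmul (n : ℕ) (a : IVec) : toVec (n • a) = (n : ℝ) • toVec a := by
  funext i; simp [toVec]

def polyFunctions : Subalgebra ℝ (Vec → ℝ) where
  carrier := {f | ∃ p : MvPolynomial (Fin 2) ℝ, ∀ x, f x = eval x p}
  mul_mem' := by
    rintro _ _ ⟨p, hp⟩ ⟨q, hq⟩
    exact ⟨p * q, fun x => by simp [hp, hq]⟩
  add_mem' := by
    rintro _ _ ⟨p, hp⟩ ⟨q, hq⟩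
    exact ⟨p + q, fun x => by simp [hp, hq]⟩
  algebraMap_mem' c := ⟨C c, fun x => by simp⟩

namespace polyFunctions

theorem eval_mem (p : MvPolynomial (Fin 2) ℝ) : (fun x => eval x p) ∈ polyFunctions :=
  ⟨p, fun _ => rfl⟩

theorem coord_mem (i : Fin 2) : (fun x : Vec => x i) ∈ polyFunctions :=
  ⟨X i, fun x => by simp⟩

theorem polynomial_eval_coord_mem (q : Polynomial ℝ) (i : Fin 2) :
    (fun x : Vec => q.eval (x i)) ∈ polyFunctions := by
  refine ⟨Polynomial.aeval (X i) q, fun x => ?_⟩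
  change _ = aeval x (Polynomial.aeval (X i) q)
  rw [← Polynomial.aeval_algHom_apply, aeval_X, Polynomial.coe_aeval_eq_eval]

theorem exists_polynomial_on_line {f : Vec → ℝ} (hf : f ∈ polyFunctions) (x w : Vec) :
    ∃ u : Polynomial ℝ, ∀ t : ℝ, f (x + t • w) = u.eval t := by
  obtain ⟨p, hp⟩ := hf
  refine ⟨aeval (fun i => Polynomial.C (x i) + Polynomial.C (w i) * Polynomial.X) p, fun t => ?_⟩
  rw [hp]
  change aeval (x + t • w) p = Polynomial.aeval t (aeval (R := ℝ) (S₁ := Polynomial ℝ) _ p)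
  rw [← AlgHom.comp_apply, comp_aeval]
  congr 2
  funext i
  simp only [Pi.add_apply, Pi.smul_apply, smul_eq_mul, map_add, map_mul, Polynomial.aeval_C,
    Polynomial.aeval_X, Algebra.algebraMap_self_apply]
  ring

theorem eq_on_line_of_natCast {f : Vec → ℝ} (hf : f ∈ polyFunctions) {x w : Vec}
    {q : Polynomial ℝ} (h : ∀ n : ℕ, f (x + (n : ℝ) • w) = q.eval (n : ℝ)) (t : ℝ) :
    f (x + t • w) = q.eval t := by
  obtain ⟨u, hu⟩ := exists_polynomial_on_line hf x w
  have : u - q = 0 := Polynomial.eq_zero_of_forall_eval_natCast_eq_zero fun n => by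
    rw [Polynomial.eval_sub, ← hu, h, sub_self]
  rw [hu, sub_eq_zero.mp this]

theorem exists_fwdDiff_eq {f : Vec → ℝ} (hf : f ∈ polyFunctions) :
    ∃ F ∈ polyFunctions, fwdDiff (toVec ie1) F = f ∧ ∀ x : Vec, x 0 = 0 → F x = 0 := by
  obtain ⟨p, hp⟩ := hf
  obtain rfl : f = fun x => eval x p := funext hp
  induction p using MvPolynomial.induction_on' with
  | monomial u c =>
    obtain ⟨q, hq0, hq⟩ := exists_polynomial_eval_add_one (u 0)
    refine ⟨fun x => c * q.eval (x 0) * x 1 ^ u 1,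
      mul_mem (mul_mem (algebraMap_mem _ c) (polynomial_eval_coord_mem q 0))
        (pow_mem (coord_mem 1) _), funext fun x => ?_, fun x hx => by simp [hx, hq0]⟩
    simp only [fwdDiff, ie1, Pi.add_apply, toVec, cons_val_zero, Int.cast_one, hq, cons_val_one,
      cons_val_fin_one, Int.cast_zero, add_zero, eval_monomial, pow_zero, implies_true,
      Finsupp.prod_fintype, Fin.prod_univ_two]
    ring
  | add p₁ p₂ ih₁ ih₂ =>
    obtain ⟨F₁, hF₁, hd₁, h0₁⟩ := ih₁ (fun _ => rfl)
    obtain ⟨F₂, hF₂, hd₂, h0₂⟩ := ih₂ (fun _ => rfl)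
    refine ⟨F₁ + F₂, add_mem hF₁ hF₂, ?_, fun x hx => by simp [h0₁ x hx, h0₂ x hx]⟩
    rw [fwdDiff_add, hd₁, hd₂]
    funext x
    simp

theorem apply_neg_of_apply_nsmul {f : Vec → ℝ} (hf : f ∈ polyFunctions) {x : Vec} {i : ℕ}
    (h : ∀ k : ℕ, f ((k : ℝ) • x) = (k : ℝ) ^ i * f x) : f (-x) = (-1) ^ i * f x := by
  have := eq_on_line_of_natCast hf (x := 0) (w := x) (q := Polynomial.C (f x) * Polynomial.X ^ i)
    (fun n => by
      rw [zero_add, h, Polynomial.eval_mul, Polynomial.eval_C, Polynomial.eval_pow,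
        Polynomial.eval_X, mul_comm]) (-1)
  rwa [zero_add, neg_one_smul, Polynomial.eval_mul, Polynomial.eval_C, Polynomial.eval_pow,
    Polynomial.eval_X, mul_comm] at this

end polyFunctions

section DiscreteAntiderivative

variable {g G : Vec → ℝ} {i : ℕ}

theorem apply_add_nsmul_of_step
    (hstep : ∀ u : IVec, G (toVec (u + ie1)) = G (toVec u) + g (toVec u)) (u : IVec) (s : ℕ) :
    G (toVec (u + s • ie1)) = G (toVec u) + ∑ l ∈ range s, g (toVec (u + l • ie1)) := by
  induction s with
  | zero => simp
  | succ s ih => rw [succ_nsmul, ← add_assoc, hstep, ih, sum_range_succ, add_assoc]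

theorem apply_nsmul_of_step_of_sum_dilate
    (hstep : ∀ u : IVec, G (toVec (u + ie1)) = G (toVec u) + g (toVec u))
    (hG0 : ∀ u : IVec, u 0 = 0 → G (toVec u) = 0)
    (hdil : ∀ (k : ℕ) (v : IVec),
      ∑ l ∈ range k, g (toVec (k • v + l • ie1)) = (k : ℝ) ^ i * g (toVec v))
    {u : IVec} (hu : u 0 = 0) (s k : ℕ) :
    G (toVec (k • (u + s • ie1))) = (k : ℝ) ^ i * G (toVec (u + s • ie1)) := by
  induction s with
  | zero => rw [zero_smul, add_zero, hG0 u hu, hG0 _ (by simp [hu]), mul_zero]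
  | succ s ih =>
    rw [succ_nsmul, ← add_assoc, smul_add, apply_add_nsmul_of_step hstep, ih, hstep, mul_add, hdil]

theorem apply_neg_of_step_of_reflect
    (hstep : ∀ u : IVec, G (toVec (u + ie1)) = G (toVec u) + g (toVec u))
    (hG0 : ∀ u : IVec, u 0 = 0 → G (toVec u) = 0)
    (hrefl : ∀ v : IVec, g (toVec (-v - ie1)) = (-1) ^ i * g (toVec v))
    {u : IVec} (hu : u 0 = 0) (s : ℕ) :
    G (toVec (-(u + s • ie1))) = -((-1) ^ i * G (toVec (u + s • ie1))) := by
  induction s with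
  | zero => rw [zero_smul, add_zero, hG0 u hu, hG0 (-u) (by simp [hu]), mul_zero, neg_zero]
  | succ s ih =>
    have h := hstep (-(u + s • ie1) - ie1)
    rw [sub_add_cancel, hrefl, ih] at h
    rw [succ_nsmul, ← add_assoc, hstep, neg_add, ← sub_eq_add_neg]
    linarith

end DiscreteAntiderivative

theorem polyFunctions.eq_zero_of_sum_dilate_of_reflect {g : Vec → ℝ} (hg : g ∈ polyFunctions)
    {i : ℕ}
    (hdil : ∀ (k : ℕ) (v : IVec),
      ∑ l ∈ range k, g (toVec (k • v + l • ie1)) = (k : ℝ) ^ i * g (toVec v))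
    (hrefl : ∀ v : IVec, g (toVec (-v - ie1)) = (-1) ^ i * g (toVec v)) (v : IVec) :
    g (toVec v) = 0 := by
  obtain ⟨G, hG, hdiff, hG0⟩ := exists_fwdDiff_eq hg
  have hstep (u : IVec) : G (toVec (u + ie1)) = G (toVec u) + g (toVec u) := by
    rw [← hdiff, fwdDiff, toVec_add]; ring
  have hG0' (u : IVec) (hu : u 0 = 0) : G (toVec u) = 0 := hG0 _ (by simp [toVec, hu])
  have hG_zero (u : IVec) (hu : 0 ≤ u 0) : G (toVec u) = 0 := by
    obtain ⟨s, hs⟩ := Int.eq_ofNat_of_zero_le hu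
    have h0 : (u - s • ie1) 0 = 0 := by simp [hs, ie1]
    have hodd := apply_neg_of_apply_nsmul hG (x := toVec (u - s • ie1 + s • ie1)) fun k => by
      rw [← toVec_nsmul]; exact apply_nsmul_of_step_of_sum_dilate hstep hG0' hdil h0 s k
    have h := apply_neg_of_step_of_reflect hstep hG0' hrefl h0 s
    rw [sub_add_cancel] at h hodd
    rw [toVec_neg, hodd] at h
    have : (-1 : ℝ) ^ i * G (toVec u) = 0 := by linarith
    exact (mul_eq_zero.mp this).resolve_left (pow_ne_zero _ (by norm_num))
  have hg_zero (u : IVec) (hu : 0 ≤ u 0) : g (toVec u) = 0 := by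
    have := hstep u
    rw [hG_zero u hu, hG_zero _ (by simp only [ie1, Pi.add_apply, cons_val_zero]; omega)] at this
    linarith
  rcases le_or_gt 0 (v 0) with hv | hv
  · exact hg_zero v hv
  · rw [← neg_neg v, ← sub_add_cancel (-v) ie1, neg_add, ← sub_eq_add_neg, hrefl,
      hg_zero _ (by simp only [ie1, Pi.sub_apply, Pi.neg_apply, cons_val_zero]; omega), mul_zero]

def polyMaps : Subalgebra ℝ (Vec → MvPolynomial (Fin 2) ℝ) where
  carrier := {F | ∀ d, (fun x => coeff d (F x)) ∈ polyFunctions}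
  mul_mem' := by
    intro F G hF hG d
    have : (fun x => coeff d (F x * G x))
        = ∑ p ∈ antidiagonal d, (fun x => coeff p.1 (F x)) * fun x => coeff p.2 (G x) := by
      funext x; simp [coeff_mul]
    exact this ▸ sum_mem fun p _ => mul_mem (hF p.1) (hG p.2)
  add_mem' := by
    intro F G hF hG d
    convert add_mem (hF d) (hG d) using 1
    funext x
    simp
  algebraMap_mem' c d := algebraMap_mem polyFunctions (coeff d (C c))

namespace polyMaps

theorem const_mem (B : MvPolynomial (Fin 2) ℝ) : (fun _ => B) ∈ polyMaps :=
  fun d => algebraMap_mem polyFunctions (coeff d B)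

theorem linear_mem : (fun x : Vec => ∑ i, x i • (X i : MvPolynomial (Fin 2) ℝ)) ∈ polyMaps := by
  intro d
  have : (fun x : Vec => coeff d (∑ i, x i • (X i : MvPolynomial (Fin 2) ℝ)))
      = ∑ i, coeff d (X i : MvPolynomial (Fin 2) ℝ) • fun x : Vec => x i := by
    funext x; simp [mul_comm]
  exact this ▸ sum_mem fun i _ => Subalgebra.smul_mem _ (polyFunctions.coord_mem i) _

theorem eq_zero_of_sum_dilate_of_reflect {F : Vec → MvPolynomial (Fin 2) ℝ} (hF : F ∈ polyMaps)
    {i : ℕ}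
    (hdil : ∀ (k : ℕ) (v : IVec),
      ∑ l ∈ range k, F (toVec (k • v + l • ie1)) = (k : ℝ) ^ i • F (toVec v))
    (hrefl : ∀ v : IVec, F (toVec (-v - ie1)) = (-1 : ℝ) ^ i • F (toVec v)) (v : IVec) :
    F (toVec v) = 0 := by
  ext d
  simpa using polyFunctions.eq_zero_of_sum_dilate_of_reflect (hF d)
    (fun k v => by simpa [coeff_sum] using congrArg (coeff d) (hdil k v))
    (fun v => by simpa using congrArg (coeff d) (hrefl v)) v

end polyMaps

theorem eval_polyAct (φ : Matrix (Fin 2) (Fin 2) ℤ) (x : Vec) (p : MvPolynomial (Fin 2) ℝ) :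
    eval x (polyAct φ p) = eval (x ᵥ* φ.map (↑)) p := by
  change aeval x (aeval _ p) = aeval _ p
  rw [← AlgHom.comp_apply, comp_aeval]
  congr 2
  funext i
  simp [vecMul, dotProduct, mul_comm]

theorem polyAct_linPoly (φ : Matrix (Fin 2) (Fin 2) ℤ) (v : IVec) :
    polyAct φ (linPoly v) = linPoly (φ *ᵥ v) := by
  simp only [polyAct, Fin.sum_univ_two, aeval_eq_bind₁, linPoly, map_add, map_smul, bind₁_X_right,
    smul_add, smul_smul, mulVec, dotProduct, Int.cast_add, Int.cast_mul]
  module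

theorem linPoly_nsmul (n : ℕ) (v : IVec) :
    linPoly (n • v) = (n : MvPolynomial (Fin 2) ℝ) * linPoly v := by
  simp only [linPoly, Pi.smul_apply, nsmul_eq_mul, Int.cast_mul, Int.cast_natCast, mul_smul,
    Finset.mul_sum, smul_eq_C_mul, map_natCast]

theorem linPoly_ne_zero {v : IVec} (hv : v ≠ 0) : linPoly v ≠ 0 := by
  contrapose! hv
  funext j
  have := congrArg (coeff (Finsupp.single j 1)) hv
  fin_cases j <;> simpa [linPoly, coeff_X, Finsupp.single_eq_single_iff] using this

theorem polyAct_negIdMat {p : MvPolynomial (Fin 2) ℝ} {r : ℕ} (hp : p.IsHomogeneous r) :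
    polyAct negIdMat p = (-1 : ℝ) ^ r • p := by
  refine MvPolynomial.funext fun x => ?_
  rw [eval_polyAct, smul_eval, ← hp.eval_smul]
  congr 2
  funext i
  fin_cases i <;> simp [negIdMat, vecMul, dotProduct]

theorem negIdMat_mulVec (v : IVec) : negIdMat *ᵥ v = -v := by
  funext i; fin_cases i <;> simp [negIdMat, mulVec, dotProduct]

theorem eq_zero_of_forall_polyAct_eq {a : MvPolynomial (Fin 2) ℝ} {d : ℕ} (hd : d ≠ 0)
    (ha : a.IsHomogeneous d) (h : ∀ φ, IsUnit (det φ) → polyAct φ a = a) : a = 0 := by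
  have hshear (φ : ℤ → Matrix (Fin 2) (Fin 2) ℤ) (hφ : ∀ n, IsUnit (φ n).det) (w : Vec → Vec)
      (hw : ∀ (x : Vec) (n : ℤ), x ᵥ* (φ n).map (↑) = x + (n : ℝ) • w x) (x : Vec) (t : ℝ) :
      eval (x + t • w x) a = eval x a := by
    refine (polyFunctions.eq_on_line_of_natCast (polyFunctions.eval_mem a) (x := x) (w := w x)
      (q := Polynomial.C (eval x a)) (fun n => ?_) t).trans (Polynomial.eval_C)
    rw [Polynomial.eval_C, ← congrArg (eval x) (h _ (hφ n)), eval_polyAct, hw, Int.cast_natCast]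
  have hx (x : Vec) (t : ℝ) : eval (x + t • ![x 1, 0]) a = eval x a :=
    hshear (fun n => !![1, 0; n, 1]) (fun n => by simp [det_fin_two_of]) (fun x => ![x 1, 0])
      (fun x n => by funext i; fin_cases i <;> simp [vecMul, dotProduct, add_comm, mul_comm]) x t
  have hy (x : Vec) (t : ℝ) : eval (x + t • ![0, x 0]) a = eval x a :=
    hshear (fun n => !![1, n; 0, 1]) (fun n => by simp [det_fin_two_of]) (fun x => ![0, x 0])
      (fun x n => by funext i; fin_cases i <;> simp [vecMul, dotProduct, add_comm, mul_comm]) x t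
  -- off the axis `y = 0`, the two shears connect every point to `(1, 0)`
  have hconst (x : Vec) (hx1 : x 1 ≠ 0) : eval x a = eval ![1, 0] a := by
    have e₁ : x = ![1, x 1] + ((x 0 - 1) / x 1) • ![(![1, x 1] : Vec) 1, 0] := by
      funext i; fin_cases i <;> simp [hx1]
    have e₂ : (![1, x 1] : Vec) = ![1, 0] + x 1 • ![0, (![1, 0] : Vec) 0] := by
      funext i; fin_cases i <;> simp
    rw [e₁, hx, e₂, hy]
  have hC : a = C (eval ![1, 0] a) :=
    funext_set (fun _ => {0}ᶜ) (fun _ => (Set.finite_singleton 0).infinite_compl)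
      fun x hx => by simpa using hconst x (hx 1 trivial)
  have h0 : coeff 0 a = 0 := ha.coeff_eq_zero (by simpa using hd.symm)
  rw [hC, coeff_C, if_pos rfl] at h0
  rw [hC, h0, C_0]

theorem segment_add_smul_eq_image {E : Type*} [AddCommGroup E] [Module ℝ E] (p v : E) (a b : ℝ) :
    segment ℝ (p + a • v) (p + b • v) = (fun t : ℝ => p + t • v) '' segment ℝ a b := by
  have : (fun t : ℝ => p + t • v) = AffineMap.lineMap p (p + v) := by
    funext t; simp [AffineMap.lineMap_apply_module', add_comm]
  rw [this, image_segment, ← this]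

theorem segment_add_smul_union {E : Type*} [AddCommGroup E] [Module ℝ E] (p v : E) {a b c : ℝ}
    (hab : a ≤ b) (hbc : b ≤ c) :
    segment ℝ (p + a • v) (p + b • v) ∪ segment ℝ (p + b • v) (p + c • v)
      = segment ℝ (p + a • v) (p + c • v) := by
  simp only [segment_add_smul_eq_image, ← Set.image_union, segment_eq_Icc hab, segment_eq_Icc hbc,
    segment_eq_Icc (hab.trans hbc), Set.Icc_union_Icc_eq_Icc hab hbc]

theorem segment_add_smul_inter {E : Type*} [AddCommGroup E] [Module ℝ E] (p : E) {v : E}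
    (hv : v ≠ 0) {a b c : ℝ} (hab : a ≤ b) (hbc : b ≤ c) :
    segment ℝ (p + a • v) (p + b • v) ∩ segment ℝ (p + b • v) (p + c • v) = {p + b • v} := by
  have hinj : Function.Injective fun t : ℝ => p + t • v :=
    (add_right_injective p).comp (smul_left_injective ℝ hv)
  simp only [segment_add_smul_eq_image, ← Set.image_inter hinj, segment_eq_Icc hab,
    segment_eq_Icc hbc, Set.Icc_inter_Icc_eq_singleton hab hbc, Set.image_singleton]

def latticeSegment (a b : IVec) : LP :=
  ⟨segment ℝ (toVec a) (toVec b), {a, b}, ⟨a, by simp⟩,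
    by simp [Set.image_insert_eq, convexHull_pair]⟩

theorem latticeSegment_self_val (v : IVec) : (latticeSegment v v).val = {toVec v} :=
  segment_same ℝ _

def horizontalSegment (c : IVec) (m : ℕ) : LP := latticeSegment c (c + m • ie1)

-- The left endpoint is written as `toVec c + 0 • e₁` to match `segment_add_smul_union/inter`.
theorem horizontalSegment_val (c : IVec) (m : ℕ) :
    (horizontalSegment c m).val
      = segment ℝ (toVec c + (0 : ℝ) • toVec ie1) (toVec c + (m : ℝ) • toVec ie1) := by
  simp only [horizontalSegment, latticeSegment, toVec_add, toVec_nsmul, zero_smul, add_zero]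

theorem toVec_ie1_ne_zero : toVec ie1 ≠ 0 := fun h => by simpa [toVec, ie1] using congrFun h 0

theorem toVec_add_nsmul_add (c : IVec) (m : ℕ) (t : ℝ) :
    toVec (c + m • ie1) + t • toVec ie1 = toVec c + ((m : ℝ) + t) • toVec ie1 := by
  rw [toVec_add, toVec_nsmul, add_smul, add_assoc]

theorem horizontalSegment_add_val_union (c : IVec) (m n : ℕ) :
    (horizontalSegment c m).val ∪ (horizontalSegment (c + m • ie1) n).val
      = (horizontalSegment c (m + n)).val := by
  rw [horizontalSegment_val, horizontalSegment_val, horizontalSegment_val, toVec_add_nsmul_add,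
    toVec_add_nsmul_add, add_zero, Nat.cast_add]
  exact segment_add_smul_union _ _ (by positivity) (by simp)

theorem horizontalSegment_add_val_inter (c : IVec) (m n : ℕ) :
    (horizontalSegment c m).val ∩ (horizontalSegment (c + m • ie1) n).val
      = {toVec (c + m • ie1)} := by
  rw [horizontalSegment_val, horizontalSegment_val, toVec_add_nsmul_add, toVec_add_nsmul_add,
    add_zero, segment_add_smul_inter _ toVec_ie1_ne_zero (by positivity) (by simp), toVec_add,
    toVec_nsmul]

theorem translateSet_segment (v : IVec) (a b : Vec) :
    translateSet v (segment ℝ a b) = segment ℝ (a + toVec v) (b + toVec v) := by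
  have : (fun p : Vec => p + toVec v) = fun p => toVec v + p := funext fun _ => add_comm _ _
  rw [translateSet, this, segment_translate_image, add_comm, add_comm b]

theorem dilateSet_segment (m : ℕ) (a b : Vec) :
    dilateSet m (segment ℝ a b) = segment ℝ ((m : ℝ) • a) ((m : ℝ) • b) :=
  image_segment ℝ (LinearMap.lsmul ℝ Vec (m : ℝ)).toAffineMap a b

theorem matVecMap_toVec (φ : Matrix (Fin 2) (Fin 2) ℤ) (v : IVec) :
    matVecMap φ (toVec v) = toVec (φ *ᵥ v) := by
  funext i; simp [matVecMap, toVec, mulVec, dotProduct]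

theorem matSet_segment (φ : Matrix (Fin 2) (Fin 2) ℤ) (a b : IVec) :
    matSet φ (segment ℝ (toVec a) (toVec b)) = segment ℝ (toVec (φ *ᵥ a)) (toVec (φ *ᵥ b)) := by
  rw [matSet, ← matVecMap_toVec, ← matVecMap_toVec]
  exact image_segment ℝ (φ.map (↑)).mulVecLin.toAffineMap _ _

theorem exists_eq_segment_of_dimAtMostOne (P : LP) (hP : DimAtMostOne P.val) :
    ∃ a b : IVec, P.val = segment ℝ (toVec a) (toVec b) := by
  obtain ⟨S, ⟨s₀, hs₀⟩, hPS⟩ := P.2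
  have hcol : Collinear ℝ (toVec '' (S : Set IVec)) :=
    Collinear.subset (hPS ▸ subset_convexHull ℝ _) hP
  obtain ⟨w, hw⟩ := (collinear_iff_of_mem (Set.mem_image_of_mem toVec hs₀)).mp hcol
  choose! f hf using fun s (hs : s ∈ S) => hw (toVec s) (Set.mem_image_of_mem toVec hs)
  have hf' (s : IVec) (hs : s ∈ S) : toVec s = toVec s₀ + f s • w := by
    rw [hf s hs, vadd_eq_add, add_comm]
  obtain ⟨a, ha, hmin⟩ := S.exists_min_image f ⟨s₀, hs₀⟩
  obtain ⟨b, hb, hmax⟩ := S.exists_max_image f ⟨s₀, hs₀⟩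
  refine ⟨a, b, hPS.trans (Set.Subset.antisymm ?_ ?_)⟩
  · refine convexHull_min ?_ (convex_segment _ _)
    rintro _ ⟨s, hs, rfl⟩
    rw [hf' s hs, hf' a ha, hf' b hb, segment_add_smul_eq_image]
    exact Set.mem_image_of_mem _ (Icc_subset_segment ⟨hmin s hs, hmax s hs⟩)
  · exact (convex_convexHull ℝ _).segment_subset (subset_convexHull ℝ _ (Set.mem_image_of_mem _ ha))
      (subset_convexHull ℝ _ (Set.mem_image_of_mem _ hb))

theorem exists_eq_nsmul_isCoprime (u : IVec) :
    ∃ (g : ℕ) (w : IVec), IsCoprime (w 0) (w 1) ∧ u = g • w := by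
  by_cases hu : u = 0
  · exact ⟨0, ie1, by simpa [ie1] using isCoprime_one_left, by simp [hu]⟩
  have hg : 0 < Int.gcd (u 0) (u 1) := Int.gcd_pos_iff.mpr (by
    by_contra! h; exact hu (funext fun i => by fin_cases i <;> simp [h.1, h.2]))
  obtain ⟨g, w₀, w₁, hg0, hw, h0, h1⟩ := Int.exists_gcd_one' hg
  refine ⟨g, ![w₀, w₁], Int.isCoprime_iff_gcd_eq_one.mpr hw, ?_⟩
  funext i; fin_cases i <;> simp [h0, h1, mul_comm]

theorem exists_det_isUnit_mulVec_ie1 {w : IVec} (hw : IsCoprime (w 0) (w 1)) :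
    ∃ φ : Matrix (Fin 2) (Fin 2) ℤ, IsUnit φ.det ∧ φ *ᵥ ie1 = w := by
  obtain ⟨x, y, hxy⟩ := hw
  refine ⟨!![w 0, -y; w 1, x], ?_, ?_⟩
  · rw [det_fin_two_of, show w 0 * x - -y * w 1 = 1 by linarith]
    exact isUnit_one
  · funext i; fin_cases i <;> simp [mulVec, dotProduct, ie1]

theorem exists_segment_eq_matSet_horizontalSegment (a b : IVec) :
    ∃ (φ : Matrix (Fin 2) (Fin 2) ℤ) (c : IVec) (m : ℕ),
      IsUnit φ.det ∧ segment ℝ (toVec a) (toVec b) = matSet φ (horizontalSegment c m).val := by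
  obtain ⟨m, w, hw, hba⟩ := exists_eq_nsmul_isCoprime (b - a)
  obtain ⟨φ, hφ, hφw⟩ := exists_det_isUnit_mulVec_ie1 hw
  have hφa : φ *ᵥ (φ⁻¹ *ᵥ a) = a := by
    rw [mulVec_mulVec, mul_nonsing_inv _ hφ, one_mulVec]
  refine ⟨φ, φ⁻¹ *ᵥ a, m, hφ, ?_⟩
  rw [horizontalSegment, latticeSegment, matSet_segment, mulVec_add, mulVec_smul, hφw, hφa, ← hba,
    add_sub_cancel]

section Valuation

variable {i r : ℕ} {Z : LP → MvPolynomial (Fin 2) ℝ} {A : ℕ → LP → MvPolynomial (Fin 2) ℝ}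

theorem IsAssocFamily.apply_latticePoint (hA : IsAssocFamily r Z A) (hir : i ≤ r)
    (hdil : IsHomogeneousVal i Z) {P₀ : LP} (hP₀ : P₀.val = {toVec 0}) (v : IVec) :
    Z (latticeSegment v v) = (i.factorial : ℝ)⁻¹ • (A i P₀ * linPoly v ^ i) := by
  have htr (w : IVec) : Z (latticeSegment w w)
      = ∑ j ∈ range (r + 1), (j.factorial : ℝ)⁻¹ • (A j P₀ * linPoly w ^ j) :=
    hA.2.2 P₀ _ w (by
      rw [latticeSegment_self_val, hP₀, translateSet, Set.image_singleton, ← toVec_add, zero_add])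
  refine (eq_of_forall_natCast_sum_pow_mul (R := MvPolynomial (Fin 2) ℝ) hir
    (fun j => (j.factorial : ℝ)⁻¹ • (A j P₀ * linPoly v ^ j)) _ fun n => ?_).symm
  calc _ = Z (latticeSegment (n • v) (n • v)) := by
        rw [htr]
        refine Finset.sum_congr rfl fun j _ => ?_
        rw [linPoly_nsmul, smul_eq_C_mul, smul_eq_C_mul]
        ring
    _ = (n : ℝ) ^ i • Z (latticeSegment v v) :=
        hdil n _ _ (by
          rw [latticeSegment_self_val, latticeSegment_self_val, dilateSet, Set.image_singleton,
            toVec_nsmul])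
    _ = _ := by rw [Algebra.smul_def, map_pow, map_natCast]

theorem IsAssocFamily.apply_eq_zero_of_val_eq_singleton (hA : IsAssocFamily r Z A) (hir : i < r)
    (hequi : IsEquivariant Z) (hdil : IsHomogeneousVal i Z) {P : LP} {v : IVec}
    (hP : P.val = {toVec v}) : Z P = 0 := by
  obtain ⟨P₀, hP₀⟩ : ∃ P₀ : LP, P₀.val = {toVec 0} := ⟨_, latticeSegment_self_val 0⟩
  have hform := hA.apply_latticePoint hir.le hdil hP₀
  have hinv (φ : Matrix (Fin 2) (Fin 2) ℤ) (hφ : IsUnit φ.det) : polyAct φ (A i P₀) = A i P₀ := by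
    have hne : φ *ᵥ ie1 ≠ 0 := by
      rw [← mulVec_zero φ]
      exact (mulVec_injective_of_isUnit ((isUnit_iff_isUnit_det φ).mpr hφ)).ne
        fun h => by simpa [ie1] using congrFun h 0
    have h := hequi φ hφ (latticeSegment ie1 ie1) (latticeSegment (φ *ᵥ ie1) (φ *ᵥ ie1)) (by
      rw [latticeSegment_self_val, latticeSegment_self_val, matSet, Set.image_singleton,
        matVecMap_toVec])
    have hact : polyAct φ ((i.factorial : ℝ)⁻¹ • (A i P₀ * linPoly ie1 ^ i))
        = (i.factorial : ℝ)⁻¹ • (polyAct φ (A i P₀) * polyAct φ (linPoly ie1) ^ i) := by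
      simp only [polyAct, map_smul, map_mul, map_pow]
    rw [hform, hform, hact, polyAct_linPoly] at h
    exact (mul_right_cancel₀ (pow_ne_zero _ (linPoly_ne_zero hne))
      (smul_right_injective _ (inv_ne_zero (by positivity)) h)).symm
  have hA0 : A i P₀ = 0 :=
    eq_zero_of_forall_polyAct_eq (Nat.sub_ne_zero_of_lt hir) (hA.2.1 i hir.le P₀) hinv
  rw [show P = latticeSegment v v from Subtype.ext (hP.trans (latticeSegment_self_val v).symm),
    hform, hA0, zero_mul, smul_zero]

theorem IsValuation.apply_horizontalSegment (hval : IsValuation Z)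
    (hpt : ∀ (P : LP) (v : IVec), P.val = {toVec v} → Z P = 0) (c : IVec) (m : ℕ) :
    Z (horizontalSegment c m) = ∑ l ∈ range m, Z (horizontalSegment (c + l • ie1) 1) := by
  induction m with
  | zero => exact hpt _ c (by simp [horizontalSegment, latticeSegment])
  | succ m ih =>
    have h := hval (horizontalSegment c m) (horizontalSegment (c + m • ie1) 1)
      (horizontalSegment c (m + 1)) (latticeSegment (c + m • ie1) (c + m • ie1))
      (horizontalSegment_add_val_union c m 1).symm
      ((latticeSegment_self_val _).trans (horizontalSegment_add_val_inter c m 1).symm)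
    rw [hpt _ _ (latticeSegment_self_val _), add_zero] at h
    rw [← h, ih, sum_range_succ]

theorem IsAssocFamily.apply_horizontalSegment_one_eq_zero (hA : IsAssocFamily r Z A)
    (hval : IsValuation Z) (hpt : ∀ (P : LP) (v : IVec), P.val = {toVec v} → Z P = 0)
    (hhom : ∀ P, (Z P).IsHomogeneous r) (hequi : IsEquivariant Z) (hdil : IsHomogeneousVal i Z)
    (hir : i ≤ r) (he : Even (r - i)) (v : IVec) : Z (horizontalSegment v 1) = 0 := by
  set F : Vec → MvPolynomial (Fin 2) ℝ := fun x => ∑ j ∈ range (r + 1),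
    (j.factorial : ℝ)⁻¹ • (A j (horizontalSegment 0 1) * (∑ k, x k • X k) ^ j)
  have hF : F ∈ polyMaps := by
    have : F = ∑ j ∈ range (r + 1), (j.factorial : ℝ)⁻¹ •
        ((fun _ => A j (horizontalSegment 0 1)) * (fun x : Vec => ∑ k, x k • X k) ^ j) := by
      funext x; simp [F, Finset.sum_apply]
    exact this ▸ sum_mem fun j _ => Subalgebra.smul_mem _
      (mul_mem (polyMaps.const_mem _) (pow_mem polyMaps.linear_mem _)) _
  have hFZ (w : IVec) : F (toVec w) = Z (horizontalSegment w 1) :=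
    (hA.2.2 _ _ w (by
      simp only [horizontalSegment, latticeSegment, translateSet_segment, zero_add,
        add_comm _ (toVec w), toVec_add, toVec_zero, add_zero])).symm
  have hpar : (-1 : ℝ) ^ r = (-1) ^ i := by
    rw [← Nat.sub_add_cancel hir, pow_add, he.neg_one_pow, one_mul]
  rw [← hFZ]
  refine polyMaps.eq_zero_of_sum_dilate_of_reflect hF (i := i) (fun k w => ?_) (fun w => ?_) v
  · simp only [hFZ]
    rw [← hval.apply_horizontalSegment hpt]
    exact hdil k _ _ (by
      simp only [horizontalSegment, latticeSegment, dilateSet_segment, toVec_add, toVec_nsmul,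
        one_smul, smul_add])
  · rw [hFZ, hFZ, hequi negIdMat (by simp [negIdMat]) (horizontalSegment w 1) _ ?_,
      polyAct_negIdMat (hhom _), hpar]
    simp only [horizontalSegment, latticeSegment]
    rw [matSet_segment, negIdMat_mulVec, negIdMat_mulVec, segment_symm, one_smul, sub_add_cancel,
      neg_add, sub_eq_add_neg]

end Valuation

theorem simple_of_even_diff_general (i r : ℕ) (hlt : i < r) (he : Even (r - i))
    (Z : LP → MvPolynomial (Fin 2) ℝ) (hZ : MemVal i r Z) : IsSimpleVal Z := by
  obtain ⟨hval, hhom, hequi, ⟨A, hA⟩, hdil⟩ := hZ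
  have hpt (P : LP) (v : IVec) (hP : P.val = {toVec v}) : Z P = 0 :=
    hA.apply_eq_zero_of_val_eq_singleton hlt hequi hdil hP
  have hseg (c : IVec) (m : ℕ) : Z (horizontalSegment c m) = 0 := by
    rw [hval.apply_horizontalSegment hpt]
    exact sum_eq_zero fun l _ =>
      hA.apply_horizontalSegment_one_eq_zero hval hpt hhom hequi hdil hlt.le he _
  intro P hP
  obtain ⟨a, b, hab⟩ := exists_eq_segment_of_dimAtMostOne P hP
  obtain ⟨φ, c, m, hφ, hφc⟩ := exists_segment_eq_matSet_horizontalSegment a b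
  rw [hequi φ hφ _ P (hab.trans hφc), hseg]
  exact map_zero _

/-- Lemma 10: if `r - i > 0` is even and `i ≥ 1`, every `Z ∈ Val_i^r` is simple. -/
theorem simple_of_even_diff (i r : ℕ) (hi : 1 ≤ i) (hlt : i < r) (he : Even (r - i))
    (Z : LP → MvPolynomial (Fin 2) ℝ) (hZ : MemVal i r Z) : IsSimpleVal Z :=
  simple_of_even_diff_general i r hlt he Z hZ
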